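/- arXiv:2601.12679 — 8 statements merged into one kernel-verified Lean document; each statement's English description precedes it below -/
import Mathlib

section
/- If H₁, H₂, H₃ are spatial hybrid numbers with coordinates (bₖ, cₖ, dₖ) for k = 1,2,3, and g(H₁, H₂) = 0, then g(H₁H₂, H₃) equals the determinant of the 3×3 matrix with rows (b₁,c₁,d₁), (b₂,c₂,d₂), (b₃,c₃,d₃). -/
/-! The hybrid product is the cross product of the Lorentzian form `g`: the Gram matrix of `g`
sends `hprod x y` to the Euclidean cross product `x ⨯₃ y`. Hence `g (hprod x y) z` is the scalar
triple product of `x, y, z`, i.e. a determinant. -/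

open Real Matrix

noncomputable section

/-- Scalar product on the spatial hybrid number space, coordinates (b,c,d). -/
def g (x y : Fin 3 → ℝ) : ℝ := x 0 * y 0 - x 0 * y 1 - y 0 * x 1 - x 2 * y 2

/-- Hybridian product of g-orthogonal spatial hybrid numbers. -/
def hprod (x y : Fin 3 → ℝ) : Fin 3 → ℝ :=
  ![x 0 * y 2 - y 0 * x 2, x 0 * y 2 - y 0 * x 2 - x 1 * y 2 + y 1 * x 2,
    y 0 * x 1 - x 0 * y 1]

/-- Gram matrix of g. -/
def Gmat : Matrix (Fin 3) (Fin 3) ℝ := !![1, -1, 0; -1, 0, 0; 0, 0, -1]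

lemma g_eq_dotProduct_Gmat_mulVec (x y : Fin 3 → ℝ) : g x y = Gmat *ᵥ x ⬝ᵥ y := by
  simp [g, Gmat, mulVec, dotProduct, Fin.sum_univ_three]
  ring

lemma Gmat_mulVec_hprod (x y : Fin 3 → ℝ) : Gmat *ᵥ hprod x y = x ⨯₃ y := by
  ext i
  fin_cases i <;>
    simp [hprod, Gmat, mulVec, dotProduct, Fin.sum_univ_three, cross_apply] <;> ring

theorem stmt1_general (H₁ H₂ H₃ : Fin 3 → ℝ) :
    g (hprod H₁ H₂) H₃ = (Matrix.of ![H₁, H₂, H₃]).det := by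
  rw [g_eq_dotProduct_Gmat_mulVec, Gmat_mulVec_hprod, dotProduct_comm,
    triple_product_permutation, triple_product_eq_det]
  rfl

/-- If g(H₁,H₂) = 0, then g(H₁H₂, H₃) is the determinant of the matrix with
rows the coordinates of H₁, H₂, H₃. -/
theorem stmt1 (H₁ H₂ H₃ : Fin 3 → ℝ) (h : g H₁ H₂ = 0) :
    g (hprod H₁ H₂) H₃ = (Matrix.of ![H₁, H₂, H₃]).det :=
  stmt1_general H₁ H₂ H₃
end
end

section
/- If A is a spatial hybrid motion and H₁, H₂ are spatial hybrid numbers with g(H₁, H₂) = 0, then (AH₁)(AH₂) = A(H₁H₂), i.e., A commutes with the hybridian product of g-orthogonal spatial hybrid numbers. -/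
/-!
A motion preserves `g`, and the defining identity `g(H₁H₂, H₃) = det(H₁, H₂, H₃)` turns
`g((AH₁)(AH₂), AH₃)` into `det A · det(H₁, H₂, H₃) = g(H₁H₂, H₃) = g(A(H₁H₂), AH₃)`.
Since `A` is invertible, `AH₃` ranges over all vectors, and `g` is nondegenerate
(`det G = 1`), so the two products agree.
-/

open Real Matrix

noncomputable section

namespace Matrix

variable {n R : Type*} [Fintype n]

theorem mulVec_dotProduct_mulVec_mulVec [CommSemiring R] (A G : Matrix n n R) (x y : n → R) :
    (A *ᵥ x) ⬝ᵥ G *ᵥ (A *ᵥ y) = x ⬝ᵥ (Aᵀ * G * A) *ᵥ y := by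
  rw [← mulVec_mulVec, ← mulVec_mulVec, dotProduct_mulVec x Aᵀ, vecMul_transpose]

theorem det_of_mulVec [DecidableEq n] [CommRing R] (A : Matrix n n R) (v : n → n → R) :
    det (of fun i => A *ᵥ v i) = det A * det (of v) := by
  have hrows : (of fun i => A *ᵥ v i) = of v * Aᵀ := by
    ext i j
    simp only [of_apply, mulVec, dotProduct, mul_apply, transpose_apply, mul_comm]
  rw [hrows, det_mul, det_transpose, mul_comm]

end Matrix

theorem g_eq_dotProduct_mulVec (x y : Fin 3 → ℝ) : g x y = x ⬝ᵥ Gmat *ᵥ y := by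
  simp only [g, Gmat, dotProduct, mulVec, Fin.sum_univ_three, of_apply, cons_val', cons_val_zero,
    cons_val_one, cons_val, cons_val_fin_one]
  ring

theorem det_Gmat : Gmat.det = 1 := by
  simp [Gmat, det_fin_three]

theorem eq_of_forall_g_eq {u v : Fin 3 → ℝ} (h : ∀ z, g u z = g v z) : u = v := by
  have hG : Gmat.Nondegenerate := nondegenerate_of_det_ne_zero (by simp [det_Gmat])
  refine sub_eq_zero.1 (hG.eq_zero_of_ortho fun z => ?_)
  rw [sub_dotProduct, ← g_eq_dotProduct_mulVec, ← g_eq_dotProduct_mulVec, h, sub_self]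

theorem g_mulVec_mulVec {A : Matrix (Fin 3) (Fin 3) ℝ} (hA : Aᵀ * Gmat * A = Gmat)
    (x y : Fin 3 → ℝ) : g (A *ᵥ x) (A *ᵥ y) = g x y := by
  rw [g_eq_dotProduct_mulVec, g_eq_dotProduct_mulVec, mulVec_dotProduct_mulVec_mulVec, hA]

theorem g_hprod (x y z : Fin 3 → ℝ) : g (hprod x y) z = det (of ![x, y, z]) := by
  simp only [g, hprod, det_fin_three, of_apply, cons_val', cons_val_zero, cons_val_one, cons_val,
    cons_val_fin_one]
  ring

theorem g_hprod_mulVec (A : Matrix (Fin 3) (Fin 3) ℝ) (x y z : Fin 3 → ℝ) :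
    g (hprod (A *ᵥ x) (A *ᵥ y)) (A *ᵥ z) = det A * g (hprod x y) z := by
  rw [g_hprod, g_hprod, ← det_of_mulVec]
  congr 1
  ext i
  fin_cases i <;> rfl

theorem stmt4_general (A : Matrix (Fin 3) (Fin 3) ℝ) (hA : Aᵀ * Gmat * A = Gmat)
    (hdet : A.det = 1) (H₁ H₂ : Fin 3 → ℝ) :
    hprod (A.mulVec H₁) (A.mulVec H₂) = A.mulVec (hprod H₁ H₂) := by
  have hA_unit : IsUnit A := (isUnit_iff_isUnit_det A).2 (hdet ▸ isUnit_one)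
  refine eq_of_forall_g_eq fun z => ?_
  obtain ⟨w, rfl⟩ := mulVec_surjective_iff_isUnit.2 hA_unit z
  rw [g_hprod_mulVec, hdet, one_mul, g_mulVec_mulVec hA]

/-- Spatial hybrid motions commute with the hybridian product of
g-orthogonal spatial hybrid numbers. -/
theorem stmt4 (A : Matrix (Fin 3) (Fin 3) ℝ) (hA : Aᵀ * Gmat * A = Gmat)
    (hdet : A.det = 1) (H₁ H₂ : Fin 3 → ℝ) (h : g H₁ H₂ = 0) :
    hprod (A.mulVec H₁) (A.mulVec H₂) = A.mulVec (hprod H₁ H₂) :=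
  stmt4_general A hA hdet H₁ H₂
end
end

section
/- Let H₁, H₂ be spatial hybrid numbers with g(H₁,H₁) = δ₁, g(H₂,H₂) = δ₂ where δ₁, δ₂ ∈ {1,-1}, and g(H₁,H₂) = 0. Then the hybridian product μ = H₁H₂ is a spatial hybrid number satisfying g(μ,μ) = δ₁δ₂, g(H₁,μ) = 0, and g(H₂,μ) = 0. -/
open Real Matrix

noncomputable section

/-! The hybridian product is the cross product of the Lorentzian form `g`: it is `g`-orthogonal
to both factors and satisfies Lagrange's identity. -/

theorem g_hprod_left (x y : Fin 3 → ℝ) : g x (hprod x y) = 0 := by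
  simp only [g, hprod, cons_val_zero, cons_val_one, cons_val_two, head_cons, tail_cons]
  ring

theorem g_hprod_right (x y : Fin 3 → ℝ) : g y (hprod x y) = 0 := by
  simp only [g, hprod, cons_val_zero, cons_val_one, cons_val_two, head_cons, tail_cons]
  ring

theorem g_hprod_self (x y : Fin 3 → ℝ) :
    g (hprod x y) (hprod x y) = g x x * g y y - g x y ^ 2 := by
  simp only [g, hprod, cons_val_zero, cons_val_one, cons_val_two, head_cons, tail_cons]
  ring

theorem stmt5_general (H₁ H₂ : Fin 3 → ℝ) (δ₁ δ₂ : ℝ)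
    (h₁ : g H₁ H₁ = δ₁) (h₂ : g H₂ H₂ = δ₂) (h₁₂ : g H₁ H₂ = 0) :
    g (hprod H₁ H₂) (hprod H₁ H₂) = δ₁ * δ₂ ∧
    g H₁ (hprod H₁ H₂) = 0 ∧ g H₂ (hprod H₁ H₂) = 0 := by
  refine ⟨?_, g_hprod_left H₁ H₂, g_hprod_right H₁ H₂⟩
  rw [g_hprod_self, h₁, h₂, h₁₂]
  ring

/-- For g-orthogonal unit spatial hybrid numbers of signs δ₁, δ₂, the
hybridian product μ = H₁H₂ satisfies g(μ,μ) = δ₁δ₂ and is g-orthogonal to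
H₁ and H₂. -/
theorem stmt5 (H₁ H₂ : Fin 3 → ℝ) (δ₁ δ₂ : ℝ)
    (hδ₁ : δ₁ = 1 ∨ δ₁ = -1) (hδ₂ : δ₂ = 1 ∨ δ₂ = -1)
    (h₁ : g H₁ H₁ = δ₁) (h₂ : g H₂ H₂ = δ₂) (h₁₂ : g H₁ H₂ = 0) :
    g (hprod H₁ H₂) (hprod H₁ H₂) = δ₁ * δ₂ ∧
    g H₁ (hprod H₁ H₂) = 0 ∧ g H₂ (hprod H₁ H₂) = 0 :=
  stmt5_general H₁ H₂ δ₁ δ₂ h₁ h₂ h₁₂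
end
end

section
/- With ν₁, ν₂ g-orthogonal unit spatial hybrid numbers of signs δ₁, δ₂, and m, n ∈ ℝ with σ := sgn(δ₁m² + δ₂n²) ≠ 0, define n₁ = (σδ₁m ν₁ + σδ₂n ν₂)/√(σ(δ₁m² + δ₂n²)) and n₂ = (-n ν₁ + m ν₂)/√(σ(δ₁m² + δ₂n²)). Then g(n₁,n₁) = σ, g(n₂,n₂) = σδ₁δ₂, g(n₁,n₂) = 0, and n₁n₂ = ν₁ν₂. -/
open Real Matrix

noncomputable section

/-! Both forms are bilinear, `g` symmetric and `hprod` alternating, so on the span of `ν₁, ν₂`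
the form `g` is `diag(δ₁, δ₂)` and `hprod` scales `hprod ν₁ ν₂` by the determinant of the
coefficient matrix. Since `σ² = δᵢ² = 1` and `r² = σ(δ₁m² + δ₂n²) = |δ₁m² + δ₂n²| > 0`, all
four identities reduce to polynomial identities; the determinant is `σ(δ₁m² + δ₂n²)/r² = 1`. -/

theorem g_smul_add_smul (x y : Fin 3 → ℝ) (a b c d : ℝ) :
    g (a • x + b • y) (c • x + d • y)
      = a * c * g x x + (a * d + b * c) * g x y + b * d * g y y := by
  simp only [g, Pi.add_apply, Pi.smul_apply, smul_eq_mul]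
  ring

theorem hprod_smul_add_smul (x y : Fin 3 → ℝ) (a b c d : ℝ) :
    hprod (a • x + b • y) (c • x + d • y) = (a * d - b * c) • hprod x y := by
  ext i
  fin_cases i <;>
    simp only [hprod, Pi.add_apply, Pi.smul_apply, smul_eq_mul, Fin.zero_eta, Fin.mk_one,
      Fin.reduceFinMk, cons_val_zero, cons_val_one, cons_val] <;>
    ring

/-- Rotating the g-orthogonal pair (ν₁,ν₂) by the matrix built from m, n
yields another orthogonal pair (n₁,n₂) with g(n₁,n₁) = σ,
g(n₂,n₂) = σδ₁δ₂, g(n₁,n₂) = 0 and n₁n₂ = ν₁ν₂. -/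
theorem stmt6 (ν₁ ν₂ : Fin 3 → ℝ) (δ₁ δ₂ m n σ : ℝ)
    (hδ₁ : δ₁ = 1 ∨ δ₁ = -1) (hδ₂ : δ₂ = 1 ∨ δ₂ = -1)
    (h₁ : g ν₁ ν₁ = δ₁) (h₂ : g ν₂ ν₂ = δ₂) (h₁₂ : g ν₁ ν₂ = 0)
    (hmn : δ₁ * m ^ 2 + δ₂ * n ^ 2 ≠ 0)
    (hσ : σ = Real.sign (δ₁ * m ^ 2 + δ₂ * n ^ 2)) :
    let r : ℝ := Real.sqrt (σ * (δ₁ * m ^ 2 + δ₂ * n ^ 2))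
    let n₁ : Fin 3 → ℝ := (σ * δ₁ * m / r) • ν₁ + (σ * δ₂ * n / r) • ν₂
    let n₂ : Fin 3 → ℝ := (-n / r) • ν₁ + (m / r) • ν₂
    g n₁ n₁ = σ ∧ g n₂ n₂ = σ * δ₁ * δ₂ ∧ g n₁ n₂ = 0 ∧
    hprod n₁ n₂ = hprod ν₁ ν₂ := by
  intro r n₁ n₂
  have hE : 0 < σ * (δ₁ * m ^ 2 + δ₂ * n ^ 2) := hσ ▸ Real.sign_mul_pos_of_ne_zero _ hmn
  have hr_sq : r ^ 2 = σ * (δ₁ * m ^ 2 + δ₂ * n ^ 2) := Real.sq_sqrt hE.le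
  have hr : r ≠ 0 := (Real.sqrt_pos.2 hE).ne'
  have hσ_sq : σ ^ 2 = 1 := by
    rcases Real.sign_apply_eq_of_ne_zero _ hmn with h | h <;> simp [hσ, h]
  have hδ₁_sq : δ₁ ^ 2 = 1 := by rcases hδ₁ with rfl | rfl <;> norm_num
  have hδ₂_sq : δ₂ ^ 2 = 1 := by rcases hδ₂ with rfl | rfl <;> norm_num
  refine ⟨?_, ?_, ?_, ?_⟩
  · rw [g_smul_add_smul, h₁, h₂, h₁₂]
    field_simp
    linear_combination (δ₁ ^ 3 * m ^ 2 + δ₂ ^ 3 * n ^ 2 - (δ₁ * m ^ 2 + δ₂ * n ^ 2)) * hσ_sq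
      + δ₁ * m ^ 2 * hδ₁_sq + δ₂ * n ^ 2 * hδ₂_sq - σ * hr_sq
  · rw [g_smul_add_smul, h₁, h₂, h₁₂]
    field_simp
    linear_combination -σ * δ₁ * δ₂ * hr_sq - δ₁ * δ₂ * (δ₁ * m ^ 2 + δ₂ * n ^ 2) * hσ_sq
      - δ₂ * m ^ 2 * hδ₁_sq - δ₁ * n ^ 2 * hδ₂_sq
  · rw [g_smul_add_smul, h₁, h₂, h₁₂]
    field_simp
    linear_combination σ * m * n * (hδ₂_sq - hδ₁_sq)
  · rw [hprod_smul_add_smul]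
    convert one_smul ℝ (hprod ν₁ ν₂)
    field_simp
    linear_combination -hr_sq
end
end

section
/- Let (γ, ν₁, ν₂) be a non-parabolic spatial hybrid framed curve with curvature (l,m,n,α) and μ = ν₁ν₂. For a fixed point x with γ(t₀)-x = λ₁ν₁(t₀) + λ₂ν₂(t₀), the conditions f_x'(t₀) = f_x''(t₀) = 0 hold if and only if λ₁m(t₀) + λ₂n(t₀) = α(t₀), where f_x(t) = g(γ(t)-x, γ(t)-x). -/
open Real Matrix

noncomputable section

lemma hprod_g_left (a b : Fin 3 → ℝ) : g (hprod a b) a = 0 := by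
  simp only [g, hprod, Matrix.cons_val_zero, Matrix.cons_val_one, Matrix.head_cons,
    Matrix.cons_val_two, Matrix.tail_cons]
  ring

lemma hprod_g_right (a b : Fin 3 → ℝ) : g (hprod a b) b = 0 := by
  simp only [g, hprod, Matrix.cons_val_zero, Matrix.cons_val_one, Matrix.head_cons,
    Matrix.cons_val_two, Matrix.tail_cons]
  ring

lemma hprod_g_self (a b : Fin 3 → ℝ) :
    g (hprod a b) (hprod a b) = g a a * g b b - g a b * g a b := by
  simp only [g, hprod, Matrix.cons_val_zero, Matrix.cons_val_one, Matrix.head_cons,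
    Matrix.cons_val_two, Matrix.tail_cons]
  ring

lemma g_symm (u v : Fin 3 → ℝ) : g u v = g v u := by simp only [g]; ring

lemma g_bilin (a b c d : ℝ) (u v w z : Fin 3 → ℝ) :
    g (a • u + b • v) (c • w + d • z) =
      a * c * g u w + a * d * g u z + b * c * g v w + b * d * g v z := by
  simp only [g, Pi.add_apply, Pi.smul_apply, smul_eq_mul]
  ring

lemma g_lin_right (a b : ℝ) (w u v : Fin 3 → ℝ) :
    g w (a • u + b • v) = a * g w u + b * g w v := by
  simp only [g, Pi.add_apply, Pi.smul_apply, smul_eq_mul]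
  ring

lemma g_smul_right (a : ℝ) (w u : Fin 3 → ℝ) : g w (a • u) = a * g w u := by
  simp only [g, Pi.smul_apply, smul_eq_mul]
  ring

lemma comp_hasDerivAt (F : ℝ → Fin 3 → ℝ) (hF : Differentiable ℝ F) (t : ℝ) (i : Fin 3) :
    HasDerivAt (fun s => F s i) (deriv F t i) t :=
  (hasDerivAt_pi.mp (hF t).hasDerivAt) i

/-- If γ(t₀) - x = λ₁ν₁(t₀) + λ₂ν₂(t₀), then f_x'(t₀) = f_x''(t₀) = 0
iff λ₁m(t₀) + λ₂n(t₀) = α(t₀). -/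
theorem stmt8 (γ ν₁ ν₂ : ℝ → Fin 3 → ℝ) (μ : ℝ → Fin 3 → ℝ)
    (l m n α : ℝ → ℝ) (δ₁ δ₂ : ℝ)
    (hδ₁ : δ₁ = 1 ∨ δ₁ = -1) (hδ₂ : δ₂ = 1 ∨ δ₂ = -1)
    (hμ : ∀ t, μ t = hprod (ν₁ t) (ν₂ t))
    (hu₁ : ∀ t, g (ν₁ t) (ν₁ t) = δ₁) (hu₂ : ∀ t, g (ν₂ t) (ν₂ t) = δ₂)
    (ho : ∀ t, g (ν₁ t) (ν₂ t) = 0)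
    (hγd : ContDiff ℝ (⊤ : ℕ∞) γ) (hν₁d : ContDiff ℝ (⊤ : ℕ∞) ν₁) (hν₂d : ContDiff ℝ (⊤ : ℕ∞) ν₂)
    (hαd : ContDiff ℝ (⊤ : ℕ∞) α)
    (hF₁ : ∀ t, deriv ν₁ t = l t • ν₂ t + m t • μ t)
    (hF₂ : ∀ t, deriv ν₂ t = (-(δ₁ * δ₂) * l t) • ν₁ t + n t • μ t)
    (hFμ : ∀ t, deriv μ t = (-δ₂ * m t) • ν₁ t + (-δ₁ * n t) • ν₂ t)
    (hγ' : ∀ t, deriv γ t = α t • μ t)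
    (x : Fin 3 → ℝ) (f : ℝ → ℝ) (hf : ∀ t, f t = g (γ t - x) (γ t - x))
    (t₀ : ℝ) (hα : α t₀ ≠ 0) (lam₁ lam₂ : ℝ)
    (hx : γ t₀ - x = lam₁ • ν₁ t₀ + lam₂ • ν₂ t₀) :
    (deriv f t₀ = 0 ∧ deriv (deriv f) t₀ = 0) ↔
      lam₁ * m t₀ + lam₂ * n t₀ = α t₀ := by
  have hγdiff : Differentiable ℝ γ := hγd.differentiable (by simp)
  have hν₁diff : Differentiable ℝ ν₁ := hν₁d.differentiable (by simp)
  have hν₂diff : Differentiable ℝ ν₂ := hν₂d.differentiable (by simp)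
  have hαdiff : Differentiable ℝ α := hαd.differentiable (by simp)
  have hν₁c : ∀ i, Differentiable ℝ fun t => ν₁ t i := fun i => differentiable_pi.mp hν₁diff i
  have hν₂c : ∀ i, Differentiable ℝ fun t => ν₂ t i := fun i => differentiable_pi.mp hν₂diff i
  have hμdiff : Differentiable ℝ μ := by
    apply differentiable_pi.mpr
    intro i
    fin_cases i
    · have : (fun t => μ t 0) = fun t => ν₁ t 0 * ν₂ t 2 - ν₂ t 0 * ν₁ t 2 := by
        funext t; rw [hμ]; rfl
      simpa [this, Pi.mul_def, Pi.sub_def, Pi.add_def] using ((hν₁c 0).mul (hν₂c 2)).sub ((hν₂c 0).mul (hν₁c 2))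
    · have : (fun t => μ t 1) =
          fun t => ν₁ t 0 * ν₂ t 2 - ν₂ t 0 * ν₁ t 2 - ν₁ t 1 * ν₂ t 2 + ν₂ t 1 * ν₁ t 2 := by
        funext t; rw [hμ]; rfl
      simpa [this, Pi.mul_def, Pi.sub_def, Pi.add_def] using
        ((((hν₁c 0).mul (hν₂c 2)).sub ((hν₂c 0).mul (hν₁c 2))).sub
          ((hν₁c 1).mul (hν₂c 2))).add ((hν₂c 1).mul (hν₁c 2))
    · have : (fun t => μ t 2) = fun t => ν₂ t 0 * ν₁ t 1 - ν₁ t 0 * ν₂ t 1 := by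
        funext t; rw [hμ]; rfl
      simpa [this, Pi.mul_def, Pi.sub_def, Pi.add_def] using ((hν₂c 0).mul (hν₁c 1)).sub ((hν₁c 0).mul (hν₂c 1))
  -- first derivative of f
  have hfD : ∀ t, HasDerivAt f (2 * α t * g (μ t) (γ t - x)) t := by
    intro t
    have e : f = fun s =>
        (γ s 0 - x 0) * (γ s 0 - x 0) - (γ s 0 - x 0) * (γ s 1 - x 1)
          - (γ s 1 - x 1) * (γ s 0 - x 0) - (γ s 2 - x 2) * (γ s 2 - x 2) := by
      funext s; rw [hf]; simp only [g, Pi.sub_apply]; ring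
    rw [e]
    have h0 := (comp_hasDerivAt γ hγdiff t 0).sub_const (x 0)
    have h1 := (comp_hasDerivAt γ hγdiff t 1).sub_const (x 1)
    have h2 := (comp_hasDerivAt γ hγdiff t 2).sub_const (x 2)
    have H := (((h0.mul h0).sub (h0.mul h1)).sub (h1.mul h0)).sub (h2.mul h2)
    refine H.congr_deriv ?_
    have e0 : deriv γ t 0 = α t * μ t 0 := by rw [hγ']; simp
    have e1 : deriv γ t 1 = α t * μ t 1 := by rw [hγ']; simp
    have e2 : deriv γ t 2 = α t * μ t 2 := by rw [hγ']; simp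
    simp only [g, Pi.sub_apply, e0, e1, e2]
    ring
  have hdf : deriv f = fun t => 2 * α t * g (μ t) (γ t - x) := funext fun t => (hfD t).deriv
  -- second derivative at t₀
  have hP : HasDerivAt (fun s => g (μ s) (γ s - x))
      (g (deriv μ t₀) (γ t₀ - x) + g (μ t₀) (deriv γ t₀)) t₀ := by
    have e : (fun s => g (μ s) (γ s - x)) = fun s =>
        μ s 0 * (γ s 0 - x 0) - μ s 0 * (γ s 1 - x 1)
          - (γ s 0 - x 0) * μ s 1 - μ s 2 * (γ s 2 - x 2) := by
      funext s; simp [g, Pi.sub_apply]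
    rw [e]
    have g0 := (comp_hasDerivAt γ hγdiff t₀ 0).sub_const (x 0)
    have g1 := (comp_hasDerivAt γ hγdiff t₀ 1).sub_const (x 1)
    have g2 := (comp_hasDerivAt γ hγdiff t₀ 2).sub_const (x 2)
    have m0 := comp_hasDerivAt μ hμdiff t₀ 0
    have m1 := comp_hasDerivAt μ hμdiff t₀ 1
    have m2 := comp_hasDerivAt μ hμdiff t₀ 2
    have H := (((m0.mul g0).sub (m0.mul g1)).sub (g0.mul m1)).sub (m2.mul g2)
    refine H.congr_deriv ?_
    simp only [g, Pi.sub_apply]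
    ring
  have hα' : HasDerivAt α (deriv α t₀) t₀ := (hαdiff t₀).hasDerivAt
  have h2D : HasDerivAt (deriv f)
      (2 * deriv α t₀ * g (μ t₀) (γ t₀ - x)
        + 2 * α t₀ * (g (deriv μ t₀) (γ t₀ - x) + g (μ t₀) (deriv γ t₀))) t₀ := by
    rw [hdf]
    have H := (hα'.const_mul (2 : ℝ)).mul hP
    exact H
  -- evaluation at t₀
  have gm1 : g (μ t₀) (ν₁ t₀) = 0 := by rw [hμ]; exact hprod_g_left _ _
  have gm2 : g (μ t₀) (ν₂ t₀) = 0 := by rw [hμ]; exact hprod_g_right _ _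
  have gmm : g (μ t₀) (μ t₀) = δ₁ * δ₂ := by
    rw [hμ, hprod_g_self, hu₁, hu₂, ho]; ring
  have P0 : g (μ t₀) (γ t₀ - x) = 0 := by
    rw [hx, g_lin_right, gm1, gm2]; ring
  have Pμ' : g (deriv μ t₀) (γ t₀ - x) = -(δ₁ * δ₂) * (lam₁ * m t₀ + lam₂ * n t₀) := by
    rw [hFμ, hx, g_bilin, hu₁, hu₂, ho, g_symm (ν₂ t₀) (ν₁ t₀), ho]; ring
  have Pγ' : g (μ t₀) (deriv γ t₀) = α t₀ * (δ₁ * δ₂) := by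
    rw [hγ', g_smul_right, gmm]
  have hd1 : deriv f t₀ = 0 := by
    rw [hdf]; dsimp only; rw [P0]; ring
  have hd2 : deriv (deriv f) t₀ =
      2 * α t₀ * (δ₁ * δ₂) * (α t₀ - (lam₁ * m t₀ + lam₂ * n t₀)) := by
    rw [h2D.deriv, P0, Pμ', Pγ']; ring
  have hδ : δ₁ * δ₂ ≠ 0 := by
    rcases hδ₁ with h | h <;> rcases hδ₂ with h' | h' <;> rw [h, h'] <;> norm_num
  constructor
  · rintro ⟨-, h2⟩
    rw [hd2] at h2
    have hne : 2 * α t₀ * (δ₁ * δ₂) ≠ 0 := mul_ne_zero (mul_ne_zero two_ne_zero hα) hδ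
    have := (mul_eq_zero.mp h2).resolve_left hne
    linarith
  · intro hS
    exact ⟨hd1, by rw [hd2, hS]; ring⟩
end
end

section
/- Let (γ, n₁, n₂) be a non-parabolic spatial hybrid framed curve with curvature (L, M, 0, α) (i.e., Frenet formulas n₁' = Ln₂ + Mμ, n₂' = -δ₁δ₂Ln₁, μ' = -σδ₁δ₂Mn₁, γ' = αμ), with L(t) ≠ 0 and M(t) ≠ 0 for all t. Define the evolute Ev_γ(t) = γ(t) - (α/M)n₁ - δ₁δ₂((Mα' - M'α)/(LM²))n₂. Then Ev_γ'(t) = [-(αL/M) - δ₁δ₂ (d/dt)((Mα' - M'α)/(LM²))]·n₂(t); in particular g(Ev_γ', n₁) = g(Ev_γ', μ) = 0, so (Ev_γ, n₁, μ) is a non-parabolic spatial hybrid framed curve. -/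
open Real Matrix

noncomputable section

/-- The evolute of a non-parabolic spatial hybrid framed curve with curvature
(L, M, 0, α) has derivative parallel to n₂, hence (Ev_γ, n₁, μ) is a
non-parabolic spatial hybrid framed curve. -/
theorem stmt10 (γ n₁ n₂ μ : ℝ → Fin 3 → ℝ) (L M α : ℝ → ℝ) (σ δ₁ δ₂ : ℝ)
    (hσ : σ = 1 ∨ σ = -1) (hδ₁ : δ₁ = 1 ∨ δ₁ = -1) (hδ₂ : δ₂ = 1 ∨ δ₂ = -1)
    (hμ : ∀ t, μ t = hprod (n₁ t) (n₂ t))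
    (hg₁ : ∀ t, g (n₁ t) (n₁ t) = σ) (hg₂ : ∀ t, g (n₂ t) (n₂ t) = σ * δ₁ * δ₂)
    (hg₁₂ : ∀ t, g (n₁ t) (n₂ t) = 0) (hgμ : ∀ t, g (μ t) (μ t) = δ₁ * δ₂)
    (hγd : ContDiff ℝ (⊤ : ℕ∞) γ) (hn₁d : ContDiff ℝ (⊤ : ℕ∞) n₁) (hn₂d : ContDiff ℝ (⊤ : ℕ∞) n₂)
    (hLd : ContDiff ℝ (⊤ : ℕ∞) L) (hMd : ContDiff ℝ (⊤ : ℕ∞) M) (hαd : ContDiff ℝ (⊤ : ℕ∞) α)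
    (hF₁ : ∀ t, deriv n₁ t = L t • n₂ t + M t • μ t)
    (hF₂ : ∀ t, deriv n₂ t = (-(δ₁ * δ₂) * L t) • n₁ t)
    (hFμ : ∀ t, deriv μ t = (-(σ * δ₁ * δ₂) * M t) • n₁ t)
    (hγ' : ∀ t, deriv γ t = α t • μ t)
    (hL : ∀ t, L t ≠ 0) (hM : ∀ t, M t ≠ 0)
    (Ev : ℝ → Fin 3 → ℝ)
    (hEv : ∀ t, Ev t = γ t - (α t / M t) • n₁ t -
      (δ₁ * δ₂ * ((M t * deriv α t - deriv M t * α t) / (L t * M t ^ 2))) • n₂ t) :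
    ∀ t, deriv Ev t =
        (-(α t * L t / M t) - δ₁ * δ₂ *
          deriv (fun s => (M s * deriv α s - deriv M s * α s) / (L s * M s ^ 2)) t)
        • n₂ t ∧
      g (deriv Ev t) (n₁ t) = 0 ∧ g (deriv Ev t) (μ t) = 0 := by
  intro t
  set q : ℝ → ℝ := fun s => (M s * deriv α s - deriv M s * α s) / (L s * M s ^ 2) with hq
  have hα' : ContDiff ℝ ((⊤:ℕ∞):WithTop ℕ∞) (deriv α) := (contDiff_infty_iff_deriv.mp (hαd.of_le (by simp))).2
  have hM' : ContDiff ℝ ((⊤:ℕ∞):WithTop ℕ∞) (deriv M) := (contDiff_infty_iff_deriv.mp (hMd.of_le (by simp))).2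
  have hqdiff : DifferentiableAt ℝ q t := by
    apply DifferentiableAt.div
    · exact ((hMd.differentiable (by simp) t).mul (hα'.differentiable (by simp) t)).sub
        ((hM'.differentiable (by simp) t).mul (hαd.differentiable (by simp) t))
    · exact (hLd.differentiable (by simp) t).mul
        ((hMd.differentiable (by simp) t).pow 2)
    · exact mul_ne_zero (hL t) (pow_ne_zero 2 (hM t))
  have hasq : HasDerivAt q (deriv q t) t := hqdiff.hasDerivAt
  have hasα : HasDerivAt α (deriv α t) t := (hαd.differentiable (by simp) t).hasDerivAt
  have hasM : HasDerivAt M (deriv M t) t := (hMd.differentiable (by simp) t).hasDerivAt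
  have hasγ : HasDerivAt γ (α t • μ t) t := by
    have := (hγd.differentiable (by simp) t).hasDerivAt
    rwa [hγ' t] at this
  have hasn₁ : HasDerivAt n₁ (deriv n₁ t) t := (hn₁d.differentiable (by simp) t).hasDerivAt
  have hasn₂ : HasDerivAt n₂ (deriv n₂ t) t := (hn₂d.differentiable (by simp) t).hasDerivAt
  have hasf : HasDerivAt (fun s => α s / M s)
      ((deriv α t * M t - α t * deriv M t) / M t ^ 2) t := hasα.div hasM (hM t)
  have hash : HasDerivAt (fun s => δ₁ * δ₂ * q s) (δ₁ * δ₂ * deriv q t) t :=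
    hasq.const_mul (δ₁ * δ₂)
  have hEvf : Ev = fun s => γ s - (α s / M s) • n₁ s - (δ₁ * δ₂ * q s) • n₂ s :=
    funext fun s => hEv s
  have hasEv : HasDerivAt Ev
      ((α t • μ t - ((α t / M t) • deriv n₁ t +
        ((deriv α t * M t - α t * deriv M t) / M t ^ 2) • n₁ t)) -
       ((δ₁ * δ₂ * q t) • deriv n₂ t + (δ₁ * δ₂ * deriv q t) • n₂ t)) t := by
    rw [hEvf]
    exact (hasγ.sub (hasf.smul hasn₁)).sub (hash.smul hasn₂)
  have hD : deriv Ev t =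
      (-(α t * L t / M t) - δ₁ * δ₂ * deriv q t) • n₂ t := by
    rw [hasEv.deriv, hF₁ t, hF₂ t]
    funext i
    have hqt : q t = (M t * deriv α t - deriv M t * α t) / (L t * M t ^ 2) := rfl
    simp only [Pi.smul_apply, Pi.add_apply, Pi.sub_apply, smul_eq_mul, hqt]
    rcases hδ₁ with h1 | h1 <;> rcases hδ₂ with h2 | h2 <;> subst h1 h2 <;>
      field_simp [hL t, hM t] <;> ring
  refine ⟨hD, ?_, ?_⟩
  · have h12 := hg₁₂ t
    rw [hD]
    simp only [g, Pi.smul_apply, smul_eq_mul] at h12 ⊢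
    linear_combination (-(α t * L t / M t) - δ₁ * δ₂ * deriv q t) * h12
  · rw [hD, hμ t]
    simp only [g, hprod, Pi.smul_apply, smul_eq_mul, Matrix.cons_val_zero,
      Matrix.cons_val_one, Matrix.head_cons, Matrix.cons_val_two, Matrix.tail_cons]
    ring
end
end

section
/- Let (γ, n₁, n₂) be a non-parabolic spatial hybrid framed curve with curvature (L, M, 0, α), L ≠ 0 everywhere, and Ev_γ its evolute. For a fixed point p, the pedal curve of (Ev_γ, n₁, μ) relative to p equals the contrapedal curve of (γ, n₁, n₂) relative to p: Pe_{Ev_γ,p}(t) = p - δ₁δ₂ g(p - γ(t), μ(t)) μ(t) = CPe_{γ,p}(t). -/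
open Real Matrix

noncomputable section

/-- The pedal curve of the evolute (Ev_γ, n₁, μ) relative to p coincides with
the contrapedal curve of (γ, n₁, n₂) relative to p. -/
theorem stmt13 (γ n₁ n₂ μ : ℝ → Fin 3 → ℝ) (L M α : ℝ → ℝ) (σ δ₁ δ₂ : ℝ)
    (hσ : σ = 1 ∨ σ = -1) (hδ₁ : δ₁ = 1 ∨ δ₁ = -1) (hδ₂ : δ₂ = 1 ∨ δ₂ = -1)
    (hμ : ∀ t, μ t = hprod (n₁ t) (n₂ t))
    (hg₁ : ∀ t, g (n₁ t) (n₁ t) = σ) (hg₂ : ∀ t, g (n₂ t) (n₂ t) = σ * δ₁ * δ₂)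
    (hg₁₂ : ∀ t, g (n₁ t) (n₂ t) = 0) (hgμ : ∀ t, g (μ t) (μ t) = δ₁ * δ₂)
    (hg₁μ : ∀ t, g (n₁ t) (μ t) = 0) (hg₂μ : ∀ t, g (n₂ t) (μ t) = 0)
    (hγd : ContDiff ℝ (⊤ : ℕ∞) γ) (hn₁d : ContDiff ℝ (⊤ : ℕ∞) n₁) (hn₂d : ContDiff ℝ (⊤ : ℕ∞) n₂)
    (hLd : ContDiff ℝ (⊤ : ℕ∞) L) (hMd : ContDiff ℝ (⊤ : ℕ∞) M) (hαd : ContDiff ℝ (⊤ : ℕ∞) α)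
    (hF₁ : ∀ t, deriv n₁ t = L t • n₂ t + M t • μ t)
    (hF₂ : ∀ t, deriv n₂ t = (-(δ₁ * δ₂) * L t) • n₁ t)
    (hFμ : ∀ t, deriv μ t = (-(σ * δ₁ * δ₂) * M t) • n₁ t)
    (hγ' : ∀ t, deriv γ t = α t • μ t)
    (hL : ∀ t, L t ≠ 0) (hM : ∀ t, M t ≠ 0)
    (Ev : ℝ → Fin 3 → ℝ)
    (hEv : ∀ t, Ev t = γ t - (α t / M t) • n₁ t -
      (δ₁ * δ₂ * ((M t * deriv α t - deriv M t * α t) / (L t * M t ^ 2))) • n₂ t)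
    (p : Fin 3 → ℝ) :
    ∀ t, p - (δ₁ * δ₂ * g (p - Ev t) (μ t)) • μ t
      = p - (δ₁ * δ₂ * g (p - γ t) (μ t)) • μ t := by
  intro t
  have h1 := hg₁μ t
  have h2 := hg₂μ t
  have key : g (p - Ev t) (μ t) = g (p - γ t) (μ t) := by
    simp only [g, hEv t, Pi.sub_apply, Pi.smul_apply, smul_eq_mul] at *
    linear_combination (α t / M t) * h1 +
      (δ₁ * δ₂ * ((M t * deriv α t - deriv M t * α t) / (L t * M t ^ 2))) * h2
  rw [key]
end
end

section
/- Let (γ, n₁, n₂) be a non-parabolic spatial hybrid framed curve with curvature (L, M, 0, α), and Inv_γ = γ + f₁n₁ + f₂μ its involute (f₁' = σδ₁δ₂Mf₂, f₂' = -Mf₁ - α). For a fixed point p, the contrapedal curve of (Inv_γ, n₁, μ) relative to p equals the pedal curve of (γ, n₁, n₂) relative to p: CPe_{Inv_γ,p}(t) = p - σδ₁δ₂ g(p - γ(t), n₂(t)) n₂(t) = Pe_{γ,p}(t). -/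
open Real Matrix

noncomputable section

/- The pedal and contrapedal constructions only see the component of `p - Inv_γ` along `n₂`,
and the displacement `Inv_γ - γ = f₁ n₁ + f₂ μ` is `g`-orthogonal to `n₂`. -/

lemma g_add_left (x y z : Fin 3 → ℝ) : g (x + y) z = g x z + g y z := by
  simp only [g, Pi.add_apply]
  ring

lemma g_sub_left (x y z : Fin 3 → ℝ) : g (x - y) z = g x z - g y z := by
  simp only [g, Pi.sub_apply]
  ring

lemma g_smul_left (a : ℝ) (x z : Fin 3 → ℝ) : g (a • x) z = a * g x z := by
  simp only [g, Pi.smul_apply, smul_eq_mul]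
  ring

lemma g_sub_add_smul_add_smul_of_orthogonal {u v w : Fin 3 → ℝ} (x y : Fin 3 → ℝ) (a b : ℝ)
    (hu : g u w = 0) (hv : g v w = 0) : g (x - (y + a • u + b • v)) w = g (x - y) w := by
  simp only [g_sub_left, g_add_left, g_smul_left, hu, hv]
  ring

theorem stmt14_general (γ n₁ n₂ μ : ℝ → Fin 3 → ℝ) (f₁ f₂ : ℝ → ℝ)
    (σ δ₁ δ₂ : ℝ)
    (hg₁₂ : ∀ t, g (n₁ t) (n₂ t) = 0) (hg₂μ : ∀ t, g (μ t) (n₂ t) = 0)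
    (Inv : ℝ → Fin 3 → ℝ)
    (hInv : ∀ t, Inv t = γ t + f₁ t • n₁ t + f₂ t • μ t)
    (p : Fin 3 → ℝ) :
    ∀ t, p - (σ * δ₁ * δ₂ * g (p - Inv t) (n₂ t)) • n₂ t
      = p - (σ * δ₁ * δ₂ * g (p - γ t) (n₂ t)) • n₂ t := by
  intro t
  rw [hInv, g_sub_add_smul_add_smul_of_orthogonal _ _ _ _ (hg₁₂ t) (hg₂μ t)]

/-- The contrapedal curve of the involute (Inv_γ, n₁, μ) relative to p
coincides with the pedal curve of (γ, n₁, n₂) relative to p. -/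
theorem stmt14 (γ n₁ n₂ μ : ℝ → Fin 3 → ℝ) (L M α f₁ f₂ : ℝ → ℝ)
    (σ δ₁ δ₂ : ℝ)
    (hσ : σ = 1 ∨ σ = -1) (hδ₁ : δ₁ = 1 ∨ δ₁ = -1) (hδ₂ : δ₂ = 1 ∨ δ₂ = -1)
    (hμ : ∀ t, μ t = hprod (n₁ t) (n₂ t))
    (hg₁ : ∀ t, g (n₁ t) (n₁ t) = σ) (hg₂ : ∀ t, g (n₂ t) (n₂ t) = σ * δ₁ * δ₂)
    (hg₁₂ : ∀ t, g (n₁ t) (n₂ t) = 0) (hg₂μ : ∀ t, g (μ t) (n₂ t) = 0)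
    (hγd : Differentiable ℝ γ) (hn₁d : Differentiable ℝ n₁)
    (hn₂d : Differentiable ℝ n₂) (hf₁d : Differentiable ℝ f₁)
    (hf₂d : Differentiable ℝ f₂)
    (hF₁ : ∀ t, deriv n₁ t = L t • n₂ t + M t • μ t)
    (hF₂ : ∀ t, deriv n₂ t = (-(δ₁ * δ₂) * L t) • n₁ t)
    (hFμ : ∀ t, deriv μ t = (-(σ * δ₁ * δ₂) * M t) • n₁ t)
    (hγ' : ∀ t, deriv γ t = α t • μ t)
    (hf₁ : ∀ t, deriv f₁ t = σ * δ₁ * δ₂ * M t * f₂ t)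
    (hf₂ : ∀ t, deriv f₂ t = -(M t * f₁ t) - α t)
    (Inv : ℝ → Fin 3 → ℝ)
    (hInv : ∀ t, Inv t = γ t + f₁ t • n₁ t + f₂ t • μ t)
    (p : Fin 3 → ℝ) :
    ∀ t, p - (σ * δ₁ * δ₂ * g (p - Inv t) (n₂ t)) • n₂ t
      = p - (σ * δ₁ * δ₂ * g (p - γ t) (n₂ t)) • n₂ t :=
  stmt14_general γ n₁ n₂ μ f₁ f₂ σ δ₁ δ₂ hg₁₂ hg₂μ Inv hInv p
end
end
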